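/- arXiv:2007.06728 — 5 statements merged into one kernel-verified Lean document; each statement's English description precedes it below -/
import Mathlib

section
/- In the transition graph of an EREW-adjacent pair of configurations, every vertex (post) has in-degree at most one and out-degree at most one. -/
/-- A configuration of `t` towers of `n` disks on `p` posts: entry `α u y` is the
post occupied by the `y`-th largest disk of color `u` (columns 0-indexed,
column `y` holds the disks of size index `y`). -/
abbrev Config (t n p : ℕ) := Fin t → Fin n → Fin p

/-- Validity: no two equal-sized disks share a post (column-wise injectivity). -/
def ValidConfig {t n p : ℕ} (α : Config t n p) : Prop :=
  ∀ y : Fin n, Function.Injective fun u => α u y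

/-- EREW-adjacency: at least one disk moves, and every moved disk is topmost at
its source beforehand and at its destination afterwards. -/
def EREW {t n p : ℕ} (α β : Config t n p) : Prop :=
  α ≠ β ∧
    ∀ u j, α u j ≠ β u j →
      ∀ v : Fin t, ∀ y : Fin n, (j : ℕ) < (y : ℕ) →
        α v y ≠ α u j ∧ β v y ≠ β u j

/-- One step of a valid sequence: equal or EREW-adjacent configurations. -/
def Step {t n p : ℕ} (α β : Config t n p) : Prop := α = β ∨ EREW α β

/-- The set of disks moved between two configurations (the transfer vector:
each moved disk determines its source and destination posts). -/
def moves {t n p : ℕ} (α β : Config t n p) : Finset (Fin t × Fin n) :=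
  Finset.univ.filter fun d => α d.1 d.2 ≠ β d.1 d.2

/-- A valid sequence of configurations. -/
def ValidSeq {t n p : ℕ} (l : List (Config t n p)) : Prop :=
  (∀ α ∈ l, ValidConfig α) ∧ l.Chain' Step

/-- Transfer length of a configuration sequence: total number of disk moves. -/
def transferLength {t n p : ℕ} : List (Config t n p) → ℕ
  | [] => 0
  | [_] => 0
  | α :: β :: rest => (moves α β).card + transferLength (β :: rest)

/-- Containment in the cluster of grading `g·𝟏` determined by the placement `B`:
the configuration agrees with `B` on all columns of index `< g`. -/
def InCluster {t n p : ℕ} (g : ℕ) (B α : Config t n p) : Prop :=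
  ∀ u : Fin t, ∀ y : Fin n, (y : ℕ) < g → α u y = B u y

/-- The translative map onto the cluster of grading `g·𝟏` determined by `B`. -/
def T {t n p : ℕ} (g : ℕ) (B : Config t n p) (α : Config t n p) : Config t n p :=
  fun u y => if (y : ℕ) < g then B u y else α u y

/-- The reflective map swapping posts `q` and `r` on all columns of index `≥ g`. -/
def R {t n p : ℕ} (g : ℕ) (q r : Fin p) (α : Config t n p) : Config t n p :=
  fun u y => if g ≤ (y : ℕ) then
    (if α u y = q then r else if α u y = r then q else α u y) else α u y

section Transition

variable {t n p : ℕ} {α β : Config t n p}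

@[simp]
theorem mem_moves {d : Fin t × Fin n} : d ∈ moves α β ↔ α d.1 d.2 ≠ β d.1 d.2 := by
  simp [moves]

theorem moves_comm (α β : Config t n p) : moves α β = moves β α := by
  ext d
  simp only [mem_moves, ne_comm]

theorem EREW.symm (h : EREW α β) : EREW β α :=
  ⟨h.1.symm, fun u j hmoved v y hjy => (h.2 u j (Ne.symm hmoved) v y hjy).symm⟩

/-- A moved disk has no smaller disk above it on its source post, so two moved disks sharing a
source have the same size; validity then forces the same color. -/
theorem EREW.eq_of_mem_moves_of_source_eq (h : EREW α β) (hα : ValidConfig α)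
    {d e : Fin t × Fin n} (hd : d ∈ moves α β) (he : e ∈ moves α β)
    (hde : α d.1 d.2 = α e.1 e.2) : d = e := by
  obtain ⟨u, j⟩ := d
  obtain ⟨v, k⟩ := e
  rw [mem_moves] at hd he
  rcases lt_trichotomy (j : ℕ) k with hjk | hjk | hkj
  · exact absurd hde.symm (h.2 u j hd v k hjk).1
  · obtain rfl : j = k := Fin.ext hjk
    obtain rfl : u = v := hα j hde
    rfl
  · exact absurd hde (h.2 v k he u j hkj).1

theorem EREW.card_moves_from_le_one (h : EREW α β) (hα : ValidConfig α) (q : Fin p) :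
    ((moves α β).filter fun d => α d.1 d.2 = q).card ≤ 1 := by
  refine Finset.card_le_one.mpr fun d hd e he => ?_
  rw [Finset.mem_filter] at hd he
  exact h.eq_of_mem_moves_of_source_eq hα hd.1 he.1 (hd.2.trans he.2.symm)

end Transition

/-- in the transition graph of an EREW-adjacent pair, every post has
in-degree at most one and out-degree at most one. -/
theorem transition_graph_degree_le_one {t n p : ℕ} (α β : Config t n p)
    (hα : ValidConfig α) (hβ : ValidConfig β) (h : EREW α β) (q : Fin p) :
    ((moves α β).filter fun d => α d.1 d.2 = q).card ≤ 1 ∧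
    ((moves α β).filter fun d => β d.1 d.2 = q).card ≤ 1 :=
  ⟨h.card_moves_from_le_one hα q, moves_comm β α ▸ h.symm.card_moves_from_le_one hβ q⟩
end

section
/- Translative maps preserve valid sequences: if π = (α_1, ..., α_w) is a valid sequence of configurations (each consecutive pair is either equal or EREW-adjacent), and B is a cluster of grading g·𝟏, then the image sequence (T_B(α_1), ..., T_B(α_w)) is a valid sequence of configurations, each contained in B; moreover, for each v, either T_B(α_v) = T_B(α_{v+1}) or they are EREW-adjacent with transfer vector a subset of the transfer vector of (α_v, α_{v+1}). -/
/-!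
`T g B` overwrites the columns of index `< g` by the fixed valid placement `B` and leaves the
others alone. Hence an image is valid column by column, two images differ only where the
originals differ in a column of index `≥ g`, and there the EREW condition only concerns columns
of larger index, on which `T g B` is the identity.
-/

section Translative

variable {t n p : ℕ} (g : ℕ) (B : Config t n p)

lemma T_apply_of_lt {α : Config t n p} (u : Fin t) {y : Fin n} (hy : (y : ℕ) < g) :
    T g B α u y = B u y :=
  if_pos hy

lemma T_apply_of_not_lt {α : Config t n p} (u : Fin t) {y : Fin n} (hy : ¬ (y : ℕ) < g) :
    T g B α u y = α u y :=
  if_neg hy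

lemma inCluster_T (α : Config t n p) : InCluster g B (T g B α) :=
  fun u _ hy => T_apply_of_lt g B u hy

lemma ValidConfig.translate {α : Config t n p} (hB : ValidConfig B) (hα : ValidConfig α) :
    ValidConfig (T g B α) := by
  intro y u v h
  by_cases hy : (y : ℕ) < g
  · simp only [T_apply_of_lt g B _ hy] at h
    exact hB y h
  · simp only [T_apply_of_not_lt g B _ hy] at h
    exact hα y h

lemma not_lt_and_ne_of_T_apply_ne {α β : Config t n p} {u : Fin t} {j : Fin n}
    (h : T g B α u j ≠ T g B β u j) : ¬ (j : ℕ) < g ∧ α u j ≠ β u j := by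
  by_cases hj : (j : ℕ) < g
  · simp only [T_apply_of_lt g B u hj, ne_eq, not_true_eq_false] at h
  · rw [T_apply_of_not_lt g B u hj, T_apply_of_not_lt g B u hj] at h
    exact ⟨hj, h⟩

lemma moves_T_subset (α β : Config t n p) : moves (T g B α) (T g B β) ⊆ moves α β := by
  intro d hd
  simp only [moves, Finset.mem_filter, Finset.mem_univ, true_and] at hd ⊢
  exact (not_lt_and_ne_of_T_apply_ne g B hd).2

lemma EREW.translate {α β : Config t n p} (hαβ : EREW α β) (hne : T g B α ≠ T g B β) :
    EREW (T g B α) (T g B β) := by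
  refine ⟨hne, fun u j hmoved v y hjy => ?_⟩
  obtain ⟨hj, hab⟩ := not_lt_and_ne_of_T_apply_ne g B hmoved
  have hy : ¬ (y : ℕ) < g := by omega
  simp only [T_apply_of_not_lt g B _ hj, T_apply_of_not_lt g B _ hy]
  exact hαβ.2 u j hab v y hjy

lemma Step.translate {α β : Config t n p} (h : Step α β) :
    T g B α = T g B β ∨
      (EREW (T g B α) (T g B β) ∧ moves (T g B α) (T g B β) ⊆ moves α β) := by
  by_cases hT : T g B α = T g B β
  · exact Or.inl hT
  rcases h with rfl | hαβ
  · exact absurd rfl hT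
  · exact Or.inr ⟨hαβ.translate g B hT, moves_T_subset g B α β⟩

end Translative

/-- translative maps send valid sequences to valid sequences
contained in the cluster, with consecutive images equal or EREW-adjacent with a
transfer vector contained in the original one. -/
theorem translative_preserves_seq {t n p : ℕ} (g : ℕ) (B : Config t n p)
    (hB : ValidConfig B) (l : List (Config t n p)) (hl : ValidSeq l) :
    ValidSeq (l.map (T g B)) ∧
    (∀ α ∈ l.map (T g B), InCluster g B α) ∧
    l.Chain' (fun α β => T g B α = T g B β ∨
      (EREW (T g B α) (T g B β) ∧ moves (T g B α) (T g B β) ⊆ moves α β)) := by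
  obtain ⟨hvalid, hchain⟩ := hl
  have hstep := hchain.imp fun {_ _} h => Step.translate g B h
  refine ⟨⟨?_, ?_⟩, ?_, hstep⟩
  · simp only [List.mem_map]
    rintro _ ⟨α, hα, rfl⟩
    exact hB.translate g B (hvalid α hα)
  · rw [List.Chain', List.isChain_map]
    exact hstep.imp fun {_ _} h => h.imp id And.left
  · simp only [List.mem_map]
    rintro _ ⟨α, -, rfl⟩
    exact inCluster_T g B α
end

section
/- Reflective maps preserve valid sequences within a cluster: if π = (α_1, ..., α_w) is a valid sequence of configurations all contained in a cluster B of grading (g−1)·𝟏 (so no disk of size index < g moves and all such disks occupy fixed posts), then for any posts q, r, the image sequence under the reflective map R^g_{q,r} (swapping posts q and r among all disks of index ≥ g) is a valid sequence of configurations contained in B; moreover each consecutive pair in the image is either equal or EREW-adjacent with a transfer vector of the same cardinality. -/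
/-!
`R g q r` acts on each column by a fixed permutation of the posts: the transposition `(q r)` on
columns `≥ g` and the identity below. Hence it preserves column-wise injectivity and exactly which
disks move. The topmost conditions of EREW-adjacency compare a moved disk only with disks in
strictly later columns; inside a cluster of grading `g·𝟏` a moved disk lies in a column `≥ g`, so
every entry involved is transformed by the same transposition and the conditions carry over.
-/

section Reflective

variable {t n p g : ℕ} {q r : Fin p} {α β : Config t n p}

lemma R_apply_of_le {y : Fin n} (hy : g ≤ (y : ℕ)) (u : Fin t) :
    R g q r α u y = Equiv.swap q r (α u y) := by
  simp [R, hy, Equiv.swap_apply_def]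

lemma R_apply_of_lt {y : Fin n} (hy : (y : ℕ) < g) (u : Fin t) : R g q r α u y = α u y := by
  simp [R, Nat.not_le.mpr hy]

lemma R_apply_ne_R_apply_iff (u : Fin t) (y : Fin n) :
    R g q r α u y ≠ R g q r β u y ↔ α u y ≠ β u y := by
  rcases le_or_gt g y with hy | hy
  · simp only [R_apply_of_le hy, (Equiv.swap q r).injective.ne_iff]
  · simp only [R_apply_of_lt hy]

lemma R_involutive : Function.Involutive (R (t := t) (n := n) g q r) := fun α => by
  ext u y : 2
  rcases le_or_gt g y with hy | hy
  · simp only [R_apply_of_le hy, Equiv.swap_apply_self]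
  · simp only [R_apply_of_lt hy]

lemma moves_R (g : ℕ) (q r : Fin p) (α β : Config t n p) :
    moves (R g q r α) (R g q r β) = moves α β := by
  ext d
  simp only [moves, Finset.mem_filter, R_apply_ne_R_apply_iff]

lemma ValidConfig.R (g : ℕ) (q r : Fin p) (hα : ValidConfig α) : ValidConfig (R g q r α) := by
  intro y
  rcases le_or_gt g y with hy | hy
  · simp only [R_apply_of_le hy]
    exact (Equiv.swap q r).injective.comp (hα y)
  · simpa only [R_apply_of_lt hy] using hα y

lemma InCluster.R {B : Config t n p} (q r : Fin p) (hα : InCluster g B α) :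
    InCluster g B (R g q r α) := fun u y hy => (R_apply_of_lt hy u).trans (hα u y hy)

lemma InCluster.le_of_apply_ne {B : Config t n p} (hα : InCluster g B α) (hβ : InCluster g B β)
    {u : Fin t} {j : Fin n} (hj : α u j ≠ β u j) : g ≤ (j : ℕ) := by
  by_contra! hjg
  exact hj ((hα u j hjg).trans (hβ u j hjg).symm)

lemma EREW.R {B : Config t n p} (hα : InCluster g B α) (hβ : InCluster g B β) (h : EREW α β) :
    EREW (R g q r α) (R g q r β) := by
  refine ⟨R_involutive.injective.ne h.1, fun u j hj v y hjy => ?_⟩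
  have hj' : α u j ≠ β u j := (R_apply_ne_R_apply_iff u j).mp hj
  have hgj : g ≤ (j : ℕ) := hα.le_of_apply_ne hβ hj'
  have hgy : g ≤ (y : ℕ) := hgj.trans hjy.le
  obtain ⟨hsrc, hdst⟩ := h.2 u j hj' v y hjy
  simp only [R_apply_of_le hgj, R_apply_of_le hgy, (Equiv.swap q r).injective.ne_iff]
  exact ⟨hsrc, hdst⟩

lemma Step.R {B : Config t n p} (hα : InCluster g B α) (hβ : InCluster g B β) (h : Step α β) :
    Step (R g q r α) (R g q r β) :=
  h.imp (congrArg _) (EREW.R hα hβ)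

end Reflective

/-- reflective maps preserve valid sequences contained in a cluster
of grading `g·𝟏`; consecutive images are equal or EREW-adjacent with a transfer
vector of the same cardinality. -/
theorem reflective_preserves_seq {t n p : ℕ} (g : ℕ) (B : Config t n p)
    (q r : Fin p) (l : List (Config t n p)) (hl : ValidSeq l)
    (hcl : ∀ α ∈ l, InCluster g B α) :
    ValidSeq (l.map (R g q r)) ∧
    (∀ α ∈ l.map (R g q r), InCluster g B α) ∧
    l.Chain' (fun α β => R g q r α = R g q r β ∨
      (EREW (R g q r α) (R g q r β) ∧
        (moves (R g q r α) (R g q r β)).card = (moves α β).card)) := by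
  refine ⟨⟨List.forall_mem_map.2 fun α hα => (hl.1 α hα).R g q r, ?_⟩,
    List.forall_mem_map.2 fun α hα => (hcl α hα).R q r, ?_⟩
  · exact (List.isChain_map _).2 <|
      hl.2.imp_of_mem_imp fun α β hα hβ => Step.R (hcl α hα) (hcl β hβ)
  · exact hl.2.imp_of_mem_imp fun α β hα hβ hstep => hstep.imp (congrArg _) fun h =>
      ⟨h.R (hcl α hα) (hcl β hβ), by rw [moves_R]⟩
end

section
/- Applying the translative map T_A to a valid configuration sequence never increases transfer length, and if the sequence moves at least one disk of size index ≤ g at some transition, the transfer length strictly decreases. -/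
/-!
`T g A` overwrites the columns of index `< g` with the same placement in every configuration,
so between two translated configurations exactly the original moves of disks of index `≥ g`
remain. Transfer length is a sum over transitions, hence it cannot grow, and it drops as soon
as one transition moves a disk of index `< g`.
-/

open Finset

lemma moves_T {t n p : ℕ} (g : ℕ) (A α β : Config t n p) :
    moves (T g A α) (T g A β) = (moves α β).filter fun d => ¬ (d.2 : ℕ) < g := by
  ext d
  simp only [moves, mem_filter, mem_univ, true_and]
  by_cases h : (d.2 : ℕ) < g <;> simp [T, h]

section MapMonotone

variable {t n p : ℕ} (f : Config t n p → Config t n p)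

lemma transferLength_map_le (hf : ∀ α β, #(moves (f α) (f β)) ≤ #(moves α β))
    (ν : List (Config t n p)) : transferLength (ν.map f) ≤ transferLength ν := by
  induction ν using transferLength.induct with
  | case1 | case2 => simp [transferLength]
  | case3 α β rest ih =>
    simpa only [List.map_cons, transferLength] using Nat.add_le_add (hf α β) ih

lemma transferLength_map_lt (hf : ∀ α β, #(moves (f α) (f β)) ≤ #(moves α β))
    (ν : List (Config t n p)) (i : ℕ) (hi : i + 1 < ν.length)
    (hlt : #(moves (f (ν[i]'(Nat.lt_of_succ_lt hi))) (f ν[i + 1])) <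
      #(moves (ν[i]'(Nat.lt_of_succ_lt hi)) ν[i + 1])) :
    transferLength (ν.map f) < transferLength ν := by
  induction ν using transferLength.induct generalizing i with
  | case1 | case2 => simp at hi
  | case3 α β rest ih =>
    simp only [List.map_cons, transferLength]
    cases i with
    | zero => exact Nat.add_lt_add_of_lt_of_le hlt (transferLength_map_le f hf (β :: rest))
    | succ i => exact Nat.add_lt_add_of_le_of_lt (hf α β) (ih i (by simpa using hi) hlt)

end MapMonotone

/-- the translative map never increases transfer length, and if
some transition of the sequence moves a disk of index `≤ g` the transfer length
strictly decreases. -/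
theorem translative_transfer_length {t n p : ℕ} (g : ℕ) (A : Config t n p)
    (ν : List (Config t n p)) :
    transferLength (ν.map (T g A)) ≤ transferLength ν ∧
    ((∃ i, ∃ hi : i + 1 < ν.length,
        ∃ d ∈ moves (ν.get ⟨i, by omega⟩) (ν.get ⟨i + 1, hi⟩), (d.2 : ℕ) < g) →
      transferLength (ν.map (T g A)) < transferLength ν) := by
  have hle : ∀ α β, #(moves (T g A α) (T g A β)) ≤ #(moves α β) := fun α β => by
    rw [moves_T]
    exact card_filter_le _ _
  refine ⟨transferLength_map_le _ hle ν, ?_⟩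
  rintro ⟨i, hi, d, hd, hdg⟩
  refine transferLength_map_lt _ hle ν i hi ?_
  rw [moves_T]
  exact card_lt_card (filter_ssubset.mpr ⟨d, hd, not_not.mpr hdg⟩)
end

section
/- If a valid configuration sequence ν from α to β leaves the common cluster A of grading g·𝟏 containing both α and β, then ν moves some disk of size index ≤ g at least twice (i.e., at least two transitions in ν each move at least one disk of index ≤ g). -/
/-! The disk witnessing that `ν` leaves `A` has index `< g` and sits on its `A`-post at both ends
of `ν` but not at some moment in between, so it changes post at a transition before that moment
and at another one after it. -/

theorem Nat.exists_apply_ne_apply_succ {X : Type*} (f : ℕ → X) {a b : ℕ} (hab : a ≤ b)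
    (h : f a ≠ f b) : ∃ i, a ≤ i ∧ i < b ∧ f i ≠ f (i + 1) := by
  by_contra! hc
  induction b, hab using Nat.le_induction with
  | base => exact h rfl
  | succ b hab ih =>
    exact ih (fun hfb => h (hfb.trans (hc b hab b.lt_succ_self)))
      fun i hi hib => hc i hi (by omega)

theorem exists_mem_moves_of_getElem_ne {t n p : ℕ} {ν : List (Config t n p)} {a b : ℕ}
    (hab : a ≤ b) (hb : b < ν.length) {d : Fin t × Fin n} (h : ν[a] d.1 d.2 ≠ ν[b] d.1 d.2) :
    ∃ i, a ≤ i ∧ i < b ∧ ∃ hi : i + 1 < ν.length,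
      d ∈ moves (ν.get ⟨i, by omega⟩) (ν.get ⟨i + 1, hi⟩) := by
  obtain ⟨i, hai, hib, hne⟩ :=
    Nat.exists_apply_ne_apply_succ (fun m => ν[m]?.map fun γ => γ d.1 d.2) hab
      (by simpa [List.getElem?_eq_getElem, hb, hab.trans_lt hb] using h)
  have hi : i + 1 < ν.length := by omega
  refine ⟨i, hai, hib, hi, ?_⟩
  simpa [moves, List.getElem?_eq_getElem, hi, (Nat.lt_succ_self i).trans hi] using hne

/-- a valid sequence from `α` to `β`, both in the cluster `A` of
grading `g·𝟏`, that leaves `A` must move some disk of index `≤ g` at least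
twice: at least two distinct transitions each move a disk of index `≤ g`. -/
theorem leaves_cluster_two_small_moves {t n p : ℕ} (g : ℕ) (A : Config t n p)
    (α β : Config t n p) (hα : InCluster g A α) (hβ : InCluster g A β)
    (ν : List (Config t n p))
    (hhead : ν.head? = some α) (hlast : ν.getLast? = some β)
    (hleaves : ∃ γ ∈ ν, ¬ InCluster g A γ) :
    ∃ i j, i < j ∧ ∃ hi : i + 1 < ν.length, ∃ hj : j + 1 < ν.length,
      (∃ d ∈ moves (ν.get ⟨i, by omega⟩) (ν.get ⟨i + 1, hi⟩), (d.2 : ℕ) < g) ∧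
      (∃ d ∈ moves (ν.get ⟨j, by omega⟩) (ν.get ⟨j + 1, hj⟩), (d.2 : ℕ) < g) := by
  obtain ⟨γ, hγ, hout⟩ := hleaves
  obtain ⟨k, hk, rfl⟩ := List.getElem_of_mem hγ
  simp only [InCluster, not_forall] at hout
  obtain ⟨u, y, hy, hne⟩ := hout
  have hfirst : ν[0] = α := by
    rw [List.head?_eq_getElem?, List.getElem?_eq_getElem (by omega)] at hhead
    exact Option.some_injective _ hhead
  have hlast : ν[ν.length - 1] = β := by
    rw [List.getLast?_eq_getElem?, List.getElem?_eq_getElem (by omega)] at hlast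
    exact Option.some_injective _ hlast
  obtain ⟨i, -, hik, hi, hmi⟩ := exists_mem_moves_of_getElem_ne (d := (u, y)) (Nat.zero_le k) hk
    (by rwa [hfirst, hα u y hy, ne_comm])
  obtain ⟨j, hkj, -, hj, hmj⟩ := exists_mem_moves_of_getElem_ne (ν := ν) (a := k)
    (b := ν.length - 1) (d := (u, y)) (by omega) (by omega) (by rwa [hlast, hβ u y hy])
  exact ⟨i, j, by omega, hi, hj, ⟨_, hmi, hy⟩, ⟨_, hmj, hy⟩⟩
end
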